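/- Let d₁, d₂, d₃ and n be integers such that dᵢ ∉ {1,2} for i = 1,2,3, and such that (d₁,d₂) ≠ (3,3) and (d₂,d₃) ≠ (3,3). Suppose that in SL(2,ℤ) the product X₂·X₁^{d₁}·X₂·X₁^{d₂}·X₂·X₁^{d₃}·X₂ equals X₁ⁿ or −X₁ⁿ. Then (d₁,d₂,d₃) = (3,4,3) or (d₁,d₂,d₃) = (4,3,4). (This is the algebraic core of the classification of genus-1 simplified broken Lefschetz fibrations with four Lefschetz singularities, with dᵢ = nᵢ − n_{i+1} for a Hurwitz system (X₁^{−n₁}X₂X₁^{n₁}, …, X₁^{−n₄}X₂X₁^{n₄}).) -/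

import Mathlib

/-- `SL(2,ℤ)`. -/
abbrev SL2Z := Matrix.SpecialLinearGroup (Fin 2) ℤ

/-- The matrix `X₁` with rows `(1,0),(1,1)`. -/
def X1 : SL2Z := ⟨!![1, 0; 1, 1], by norm_num [Matrix.det_fin_two_of]⟩

/-- The matrix `X₂` with rows `(1,-1),(0,1)`. -/
def X2 : SL2Z := ⟨!![1, -1; 0, 1], by norm_num [Matrix.det_fin_two_of]⟩

/-- `-E`, the negative of the identity matrix, as an element of `SL(2,ℤ)`. -/
def negE : SL2Z := ⟨!![-1, 0; 0, -1], by norm_num [Matrix.det_fin_two_of]⟩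

/-!
The first row of `±X₁ⁿ` is `(±1, 0)`, so only the first row of the word matters. The sum of its
two entries is `1 - (d₁ - 2)(d₂ - 2)`, independently of `d₃`, because `X₂ (1,1)ᵀ = (0,1)ᵀ` is
fixed by `X₁^{d₃}`. The sign `+` would force `(d₁ - 2)(d₂ - 2) = 0`; the sign `-` forces
`(d₁ - 2)(d₂ - 2) = 2`, hence `(d₁, d₂) ∈ {(3,4), (4,3)}` once `dᵢ ≠ 1`, and the `(0,0)` entry,
which is linear in `d₃`, then determines `d₃`.
-/

open Matrix Matrix.SpecialLinearGroup

lemma coe_X1 : ((X1 : SL2Z) : Matrix (Fin 2) (Fin 2) ℤ) = !![1, 0; 1, 1] := rfl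

lemma coe_X2 : ((X2 : SL2Z) : Matrix (Fin 2) (Fin 2) ℤ) = !![1, -1; 0, 1] := rfl

lemma coe_negE : ((negE : SL2Z) : Matrix (Fin 2) (Fin 2) ℤ) = !![-1, 0; 0, -1] := rfl

lemma coe_X1_zpow (d : ℤ) : ((X1 ^ d : SL2Z) : Matrix (Fin 2) (Fin 2) ℤ) = !![1, 0; d, 1] := by
  induction d using Int.induction_on with
  | zero => simp [one_fin_two]
  | succ k ih =>
    rw [_root_.zpow_add_one, coe_mul, ih, coe_X1]
    simp
  | pred k ih =>
    rw [_root_.zpow_sub_one, coe_mul, ih, coe_inv, coe_X1, adjugate_fin_two_of]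
    simp [sub_eq_add_neg]

lemma first_row_of_eq_X1_zpow_or_negE_mul {g : SL2Z} {n : ℤ}
    (h : g = X1 ^ n ∨ g = negE * X1 ^ n) : (g 0 0 = 1 ∨ g 0 0 = -1) ∧ g 0 1 = 0 := by
  rcases h with rfl | rfl <;> simp [coe_X1_zpow, coe_negE]

section
variable (d₁ d₂ d₃ : ℤ)

lemma word_apply_zero_zero :
    (X2 * X1 ^ d₁ * X2 * X1 ^ d₂ * X2 * X1 ^ d₃ * X2 : SL2Z) 0 0 =
      1 - d₁ + d₂ * (d₁ - 2) + d₃ * (1 - (d₁ - 2) * (d₂ - 2)) := by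
  simp [coe_X1_zpow, coe_X2]; ring

lemma word_apply_zero_zero_add_apply_zero_one :
    (X2 * X1 ^ d₁ * X2 * X1 ^ d₂ * X2 * X1 ^ d₃ * X2 : SL2Z) 0 0 +
      (X2 * X1 ^ d₁ * X2 * X1 ^ d₂ * X2 * X1 ^ d₃ * X2 : SL2Z) 0 1 =
      1 - (d₁ - 2) * (d₂ - 2) := by
  simp [coe_X1_zpow, coe_X2]; ring
end

lemma Int.eq_one_two_or_two_one_of_mul_eq_two {a b : ℤ} (h : a * b = 2) (ha : a ≠ -1)
    (hb : b ≠ -1) : a = 1 ∧ b = 2 ∨ a = 2 ∧ b = 1 := by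
  have hle : a ≤ 2 := Int.le_of_dvd two_pos ⟨b, h.symm⟩
  have hge : -2 ≤ a := neg_le.1 (Int.le_of_dvd two_pos (neg_dvd.2 ⟨b, h.symm⟩))
  interval_cases a <;> omega

theorem four_singularities_case_general (d₁ d₂ d₃ n : ℤ)
    (hd₁ : d₁ ≠ 1 ∧ d₁ ≠ 2) (hd₂ : d₂ ≠ 1 ∧ d₂ ≠ 2)
    (h : X2 * X1 ^ d₁ * X2 * X1 ^ d₂ * X2 * X1 ^ d₃ * X2 = X1 ^ n ∨
         X2 * X1 ^ d₁ * X2 * X1 ^ d₂ * X2 * X1 ^ d₃ * X2 = negE * X1 ^ n) :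
    (d₁, d₂, d₃) = (3, 4, 3) ∨ (d₁, d₂, d₃) = (4, 3, 4) := by
  obtain ⟨h00, h01⟩ := first_row_of_eq_X1_zpow_or_negE_mul h
  have hsum := word_apply_zero_zero_add_apply_zero_one d₁ d₂ d₃
  rw [h01, add_zero] at hsum
  rcases h00 with h00 | h00
  · have hprod : (d₁ - 2) * (d₂ - 2) = 0 := by linarith
    rcases mul_eq_zero.1 hprod with h | h <;> omega
  · have hprod : (d₁ - 2) * (d₂ - 2) = 2 := by linarith
    have hd₃ := word_apply_zero_zero d₁ d₂ d₃
    rw [h00] at hd₃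
    rcases Int.eq_one_two_or_two_one_of_mul_eq_two hprod (by omega) (by omega) with
      ⟨h₁, h₂⟩ | ⟨h₁, h₂⟩
    · obtain rfl : d₁ = 3 := by omega
      obtain rfl : d₂ = 4 := by omega
      obtain rfl : d₃ = 3 := by linarith
      exact Or.inl rfl
    · obtain rfl : d₁ = 4 := by omega
      obtain rfl : d₂ = 3 := by omega
      obtain rfl : d₃ = 4 := by linarith
      exact Or.inr rfl

/-- if `d₁, d₂, d₃ ∉ {1,2}`, `(d₁,d₂) ≠ (3,3)`, `(d₂,d₃) ≠ (3,3)`,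
and `X₂·X₁^{d₁}·X₂·X₁^{d₂}·X₂·X₁^{d₃}·X₂ = ±X₁ⁿ` in `SL(2,ℤ)`, then
`(d₁,d₂,d₃) = (3,4,3)` or `(4,3,4)`. -/
theorem four_singularities_case (d₁ d₂ d₃ n : ℤ)
    (hd₁ : d₁ ≠ 1 ∧ d₁ ≠ 2) (hd₂ : d₂ ≠ 1 ∧ d₂ ≠ 2) (hd₃ : d₃ ≠ 1 ∧ d₃ ≠ 2)
    (h12 : (d₁, d₂) ≠ (3, 3)) (h23 : (d₂, d₃) ≠ (3, 3))
    (h : X2 * X1 ^ d₁ * X2 * X1 ^ d₂ * X2 * X1 ^ d₃ * X2 = X1 ^ n ∨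
         X2 * X1 ^ d₁ * X2 * X1 ^ d₂ * X2 * X1 ^ d₃ * X2 = negE * X1 ^ n) :
    (d₁, d₂, d₃) = (3, 4, 3) ∨ (d₁, d₂, d₃) = (4, 3, 4) :=
  four_singularities_case_general d₁ d₂ d₃ n hd₁ hd₂ h
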